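/- arXiv:1108.3139 — 2 statements merged into one kernel-verified Lean document; each statement's English description precedes it below -/
import Mathlib

section
/- Let B1 and B2 be combinatorially perfect I-crystals (with respect to fixed positive integers (a_i^∨)_{i∈I} satisfying a_0^∨ = 1) of levels ℓ1 = lev(B1) and ℓ2 = lev(B2). Then the tensor product crystal B1 ⊗ B2 satisfies lev(B1 ⊗ B2) = max{lev(B1), lev(B2)}. -/
/-- An `I`-crystal on a carrier `B`: raising/lowering operators `e i, f i : B → B ⊔ {0}`
(encoded via `Option B`), mutually inverse where defined, with all strings finite. -/
structure Crystal (I : Type*) (B : Type*) where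
  e : I → B → Option B
  f : I → B → Option B
  ef : ∀ (i : I) (b b' : B), e i b = some b' → f i b' = some b
  fe : ∀ (i : I) (b b' : B), f i b = some b' → e i b' = some b
  e_bounded : ∀ (i : I) (b : B), ∃ k : ℕ, (fun o => o.bind (e i))^[k] (some b) = none
  f_bounded : ∀ (i : I) (b : B), ∃ k : ℕ, (fun o => o.bind (f i))^[k] (some b) = none

/-- The largest `k` such that `e^k b ≠ 0`, for a partial map `e : B → B ⊔ {0}`. -/
noncomputable def epsOf {B : Type*} (e : B → Option B) (b : B) : ℕ :=
  sSup {k : ℕ | (fun o => o.bind e)^[k] (some b) ≠ none}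

/-- `ε_i(b) = max {k ≥ 0 | e_i^k b ≠ 0}`. -/
noncomputable def Crystal.eps {I B : Type*} (c : Crystal I B) (i : I) (b : B) : ℕ :=
  epsOf (c.e i) b

/-- `φ_i(b) = max {k ≥ 0 | f_i^k b ≠ 0}`. -/
noncomputable def Crystal.phi {I B : Type*} (c : Crystal I B) (i : I) (b : B) : ℕ :=
  epsOf (c.f i) b

/-- The raising operators of the tensor product crystal `B1 ⊗ B2`. -/
noncomputable def tensorE {I B1 B2 : Type*} (c1 : Crystal I B1) (c2 : Crystal I B2)
    (i : I) (p : B1 × B2) : Option (B1 × B2) :=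
  if c2.eps i p.2 ≤ c1.phi i p.1 then (c1.e i p.1).map (fun x => (x, p.2))
  else (c2.e i p.2).map (fun x => (p.1, x))

/-- The lowering operators of the tensor product crystal `B1 ⊗ B2`. -/
noncomputable def tensorF {I B1 B2 : Type*} (c1 : Crystal I B1) (c2 : Crystal I B2)
    (i : I) (p : B1 × B2) : Option (B1 × B2) :=
  if c2.eps i p.2 < c1.phi i p.1 then (c1.f i p.1).map (fun x => (x, p.2))
  else (c2.f i p.2).map (fun x => (p.1, x))

/-- `⟨ε(b), K⟩ = Σ_i a_i^∨ ε_i(b)`, the level of the weight `ε(b)`. -/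
noncomputable def levK {I B : Type*} [Fintype I] (a : I → ℕ) (c : Crystal I B) (b : B) : ℕ :=
  ∑ i, a i * c.eps i b

/-- `lev(B) = min_{b ∈ B} ⟨ε(b), K⟩`. -/
noncomputable def lev {I B : Type*} [Fintype I] (a : I → ℕ) (c : Crystal I B) : ℕ :=
  sInf (Set.range (levK a c))

/-- A level-zero crystal `B` is combinatorially perfect of level `l` if it is finite and
nonempty, `lev(B) = l`, and `ε` and `φ` restrict to bijections from
`B_min = {b | ⟨ε(b), K⟩ = l}` onto `{λ ∈ ℤ_{≥0}^I | ⟨λ, K⟩ = l}`. -/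
structure IsPerfect {I B : Type*} [Fintype I] (a : I → ℕ) (c : Crystal I B) (l : ℕ) : Prop where
  finite : Finite B
  nonempty : Nonempty B
  level_zero : ∀ b : B, (∑ i, a i * c.eps i b) = ∑ i, a i * c.phi i b
  lev_eq : lev a c = l
  eps_bij : Set.BijOn (fun b i => c.eps i b)
    {b | levK a c b = l} {lam : I → ℕ | ∑ i, a i * lam i = l}
  phi_bij : Set.BijOn (fun b i => c.phi i b)
    {b | levK a c b = l} {lam : I → ℕ | ∑ i, a i * lam i = l}

/-- The level of the tensor product crystal `B1 ⊗ B2`. -/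
noncomputable def tensorLev {I B1 B2 : Type*} [Fintype I] (a : I → ℕ)
    (c1 : Crystal I B1) (c2 : Crystal I B2) : ℕ :=
  sInf (Set.range (fun p : B1 × B2 => ∑ i, a i * epsOf (tensorE c1 c2 i) p))

section EpsOfAux

variable {B : Type*} (e : B → Option B)

lemma stepIter_none (k : ℕ) : (fun o : Option B => o.bind e)^[k] none = none := by
  induction k with
  | zero => rfl
  | succ k ih =>
    rw [Function.iterate_succ_apply]
    exact ih

lemma stepIter_none_mono {b : B} {m k : ℕ} (h : m ≤ k)
    (hm : (fun o : Option B => o.bind e)^[m] (some b) = none) :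
    (fun o : Option B => o.bind e)^[k] (some b) = none := by
  obtain ⟨d, rfl⟩ := Nat.exists_eq_add_of_le h
  rw [Nat.add_comm, Function.iterate_add_apply, hm, stepIter_none]

lemma epsOf_eq {b : B} {V : ℕ}
    (h1 : (fun o : Option B => o.bind e)^[V] (some b) ≠ none)
    (h2 : (fun o : Option B => o.bind e)^[V + 1] (some b) = none) :
    epsOf e b = V := by
  have hub : ∀ k ∈ {k : ℕ | (fun o : Option B => o.bind e)^[k] (some b) ≠ none}, k ≤ V := by
    intro k hk
    by_contra hk'
    exact hk (stepIter_none_mono e (by omega) h2)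
  exact le_antisymm (csSup_le ⟨V, h1⟩ hub) (le_csSup ⟨V, hub⟩ h1)

lemma epsOf_spec {b : B} (hb : ∃ k, (fun o : Option B => o.bind e)^[k] (some b) = none) :
    (fun o : Option B => o.bind e)^[epsOf e b] (some b) ≠ none ∧
    (fun o : Option B => o.bind e)^[epsOf e b + 1] (some b) = none := by
  obtain ⟨k, hk⟩ := hb
  set S := {m : ℕ | (fun o : Option B => o.bind e)^[m] (some b) ≠ none} with hS
  have hS0 : (0 : ℕ) ∈ S := by simp [S]
  have hbdd : BddAbove S := by
    refine ⟨k, fun m hm => ?_⟩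
    by_contra h
    exact hm (stepIter_none_mono e (by omega) hk)
  have hmem : sSup S ∈ S := Nat.sSup_mem ⟨0, hS0⟩ hbdd
  have hnot : sSup S + 1 ∉ S := by
    intro h
    have := le_csSup hbdd h
    omega
  exact ⟨hmem, of_not_not hnot⟩

lemma epsOf_none {b : B} (h : e b = none) : epsOf e b = 0 := by
  refine epsOf_eq e (by simp) ?_
  simpa using h

lemma epsOf_succ {b b' : B} (h : e b = some b')
    (hb' : ∃ k, (fun o : Option B => o.bind e)^[k] (some b') = none) :
    epsOf e b = epsOf e b' + 1 := by
  obtain ⟨ha, hb⟩ := epsOf_spec e hb'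
  refine epsOf_eq e ?_ ?_
  · rw [Function.iterate_succ_apply]
    simpa [h] using ha
  · rw [Function.iterate_succ_apply]
    simpa [h] using hb

end EpsOfAux

section CrystalAux

variable {I B : Type*} (c : Crystal I B) (i : I)

lemma Crystal.eps_succ {b b' : B} (h : c.e i b = some b') :
    c.eps i b = c.eps i b' + 1 :=
  epsOf_succ (c.e i) h (c.e_bounded i b')

lemma Crystal.phi_of_e {b b' : B} (h : c.e i b = some b') :
    c.phi i b' = c.phi i b + 1 :=
  epsOf_succ (c.f i) (c.ef i b b' h) (c.f_bounded i b)

lemma Crystal.e_none_of_eps_zero {b : B} (h : c.eps i b = 0) : c.e i b = none := by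
  have hs := (epsOf_spec (c.e i) (c.e_bounded i b)).2
  have h' : c.eps i b = epsOf (c.e i) b := rfl
  rw [← h', h] at hs
  simpa using hs

lemma Crystal.e_some_of_eps_pos {b : B} (h : 0 < c.eps i b) : ∃ b', c.e i b = some b' := by
  cases he : c.e i b with
  | some b' => exact ⟨b', rfl⟩
  | none =>
    have : c.eps i b = 0 := epsOf_none (c.e i) he
    omega

end CrystalAux

section TensorAux

variable {I B1 B2 : Type*} (c1 : Crystal I B1) (c2 : Crystal I B2) (i : I)

lemma tensor_step :
    ∀ (V : ℕ) (p : B1 × B2),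
      c1.eps i p.1 + (c2.eps i p.2 - c1.phi i p.1) = V →
      (fun o : Option (B1 × B2) => o.bind (tensorE c1 c2 i))^[V] (some p) ≠ none ∧
      (fun o : Option (B1 × B2) => o.bind (tensorE c1 c2 i))^[V + 1] (some p) = none := by
  intro V
  induction V with
  | zero =>
    intro p h
    have h1 : c1.eps i p.1 = 0 := by omega
    have h2 : c2.eps i p.2 ≤ c1.phi i p.1 := by omega
    have hE : tensorE c1 c2 i p = none := by
      rw [tensorE, if_pos h2, c1.e_none_of_eps_zero i h1]
      rfl
    refine ⟨by simp, ?_⟩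
    simpa using hE
  | succ V ih =>
    intro p h
    by_cases hle : c2.eps i p.2 ≤ c1.phi i p.1
    · have h1 : 0 < c1.eps i p.1 := by omega
      obtain ⟨b1', hb1'⟩ := c1.e_some_of_eps_pos i h1
      have hE : tensorE c1 c2 i p = some (b1', p.2) := by
        rw [tensorE, if_pos hle, hb1']
        rfl
      have he1 : c1.eps i p.1 = c1.eps i b1' + 1 := c1.eps_succ i hb1'
      have hp1 : c1.phi i b1' = c1.phi i p.1 + 1 := c1.phi_of_e i hb1'
      have hv : c1.eps i (b1', p.2).1 + (c2.eps i (b1', p.2).2 - c1.phi i (b1', p.2).1) = V := by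
        simp only []
        omega
      obtain ⟨ha, hb⟩ := ih (b1', p.2) hv
      constructor
      · rw [Function.iterate_succ_apply]
        simpa [hE] using ha
      · rw [Function.iterate_succ_apply]
        simpa [hE] using hb
    · push_neg at hle
      have h2 : 0 < c2.eps i p.2 := by omega
      obtain ⟨b2', hb2'⟩ := c2.e_some_of_eps_pos i h2
      have hE : tensorE c1 c2 i p = some (p.1, b2') := by
        rw [tensorE, if_neg (by omega), hb2']
        rfl
      have he2 : c2.eps i p.2 = c2.eps i b2' + 1 := c2.eps_succ i hb2'
      have hv : c1.eps i (p.1, b2').1 + (c2.eps i (p.1, b2').2 - c1.phi i (p.1, b2').1) = V := by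
        simp only []
        omega
      obtain ⟨ha, hb⟩ := ih (p.1, b2') hv
      constructor
      · rw [Function.iterate_succ_apply]
        simpa [hE] using ha
      · rw [Function.iterate_succ_apply]
        simpa [hE] using hb

lemma epsOf_tensor (p : B1 × B2) :
    epsOf (tensorE c1 c2 i) p = c1.eps i p.1 + (c2.eps i p.2 - c1.phi i p.1) := by
  obtain ⟨ha, hb⟩ := tensor_step c1 c2 i _ p rfl
  exact epsOf_eq _ ha hb

end TensorAux

/-- for combinatorially perfect crystals `B1`, `B2` of levels `l1`, `l2`,
`lev(B1 ⊗ B2) = max{lev(B1), lev(B2)}`. -/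
theorem tensor_lev_eq_max {I B1 B2 : Type*} [Fintype I] (i0 : I) (a : I → ℕ)
    (ha : ∀ i, 0 < a i) (ha0 : a i0 = 1)
    (c1 : Crystal I B1) (c2 : Crystal I B2) (l1 l2 : ℕ)
    (h1 : IsPerfect a c1 l1) (h2 : IsPerfect a c2 l2) :
    tensorLev a c1 c2 = max l1 l2 := by
  classical
  have hlev1 : ∀ b : B1, l1 ≤ ∑ i, a i * c1.eps i b := by
    intro b
    have : lev a c1 ≤ levK a c1 b := Nat.sInf_le ⟨b, rfl⟩
    rw [h1.lev_eq] at this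
    simpa [levK] using this
  have hlev2 : ∀ b : B2, l2 ≤ ∑ i, a i * c2.eps i b := by
    intro b
    have : lev a c2 ≤ levK a c2 b := Nat.sInf_le ⟨b, rfl⟩
    rw [h2.lev_eq] at this
    simpa [levK] using this
  -- lower bound
  have hlow : ∀ p : B1 × B2,
      max l1 l2 ≤ ∑ i, a i * epsOf (tensorE c1 c2 i) p := by
    intro p
    have hform : ∀ i, epsOf (tensorE c1 c2 i) p
        = c1.eps i p.1 + (c2.eps i p.2 - c1.phi i p.1) := fun i => epsOf_tensor c1 c2 i p
    rw [max_le_iff]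
    constructor
    · refine (hlev1 p.1).trans (Finset.sum_le_sum fun i _ => ?_)
      rw [hform]
      exact Nat.mul_le_mul_left _ (Nat.le_add_right _ _)
    · have key : (∑ i, a i * c2.eps i p.2) + ∑ i, a i * c1.eps i p.1 ≤
          (∑ i, a i * epsOf (tensorE c1 c2 i) p) + ∑ i, a i * c1.phi i p.1 := by
        rw [← Finset.sum_add_distrib, ← Finset.sum_add_distrib]
        refine Finset.sum_le_sum fun i _ => ?_
        rw [hform]
        have h := Nat.mul_le_mul_left (a i)
          (show c2.eps i p.2 + c1.eps i p.1 ≤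
            (c1.eps i p.1 + (c2.eps i p.2 - c1.phi i p.1)) + c1.phi i p.1 by omega)
        calc a i * c2.eps i p.2 + a i * c1.eps i p.1
            = a i * (c2.eps i p.2 + c1.eps i p.1) := by ring
          _ ≤ a i * ((c1.eps i p.1 + (c2.eps i p.2 - c1.phi i p.1)) + c1.phi i p.1) := h
          _ = a i * (c1.eps i p.1 + (c2.eps i p.2 - c1.phi i p.1)) + a i * c1.phi i p.1 := by
              ring
      have hz : ∑ i, a i * c1.eps i p.1 = ∑ i, a i * c1.phi i p.1 := h1.level_zero p.1
      have h2' := hlev2 p.2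
      omega
  -- upper bound witness
  set lam1 : I → ℕ := fun j => if j = i0 then l1 else 0 with hlam1
  set lam2 : I → ℕ := fun j => if j = i0 then l2 else 0 with hlam2
  have hsum1 : ∑ j, a j * lam1 j = l1 := by
    simp [hlam1, mul_ite, Finset.sum_ite_eq', ha0]
  have hsum2 : ∑ j, a j * lam2 j = l2 := by
    simp [hlam2, mul_ite, Finset.sum_ite_eq', ha0]
  obtain ⟨b1, hb1min, hb1⟩ := h1.phi_bij.surjOn (show lam1 ∈ _ from hsum1)
  obtain ⟨b2, hb2min, hb2⟩ := h2.eps_bij.surjOn (show lam2 ∈ _ from hsum2)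
  have hb1' : ∀ i, c1.phi i b1 = lam1 i := fun i => congrFun hb1 i
  have hb2' : ∀ i, c2.eps i b2 = lam2 i := fun i => congrFun hb2 i
  have hval : (∑ i, a i * epsOf (tensorE c1 c2 i) (b1, b2)) = max l1 l2 := by
    have hform : ∀ i, epsOf (tensorE c1 c2 i) (b1, b2)
        = c1.eps i b1 + (lam2 i - lam1 i) := by
      intro i
      rw [epsOf_tensor]
      simp [hb1' i, hb2' i]
    calc (∑ i, a i * epsOf (tensorE c1 c2 i) (b1, b2))
        = ∑ i, (a i * c1.eps i b1 + a i * (lam2 i - lam1 i)) := by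
          refine Finset.sum_congr rfl fun i _ => ?_
          rw [hform, mul_add]
      _ = (∑ i, a i * c1.eps i b1) + ∑ i, a i * (lam2 i - lam1 i) :=
          Finset.sum_add_distrib
      _ = l1 + (l2 - l1) := by
          have e1 : (∑ i, a i * c1.eps i b1) = l1 := by
            simpa [levK] using hb1min
          have e2 : (∑ i, a i * (lam2 i - lam1 i)) = l2 - l1 := by
            have : ∀ i, a i * (lam2 i - lam1 i) = if i = i0 then a i * (l2 - l1) else 0 := by
              intro i
              simp only [hlam1, hlam2]
              split_ifs <;> simp
            rw [Finset.sum_congr rfl fun i _ => this i]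
            simp [Finset.sum_ite_eq', ha0]
          rw [e1, e2]
      _ = max l1 l2 := by omega
  apply le_antisymm
  · exact Nat.sInf_le ⟨(b1, b2), hval⟩
  · have hne : Nonempty (B1 × B2) := by
      have := h1.nonempty; have := h2.nonempty
      exact instNonemptyProd
    obtain ⟨q⟩ := hne
    refine le_csInf ⟨_, Set.mem_range_self q⟩ ?_
    rintro x ⟨p, rfl⟩
    exact hlow p
end

section
/- Let B1, B2 be I-crystals with 0 ∈ I, each equipped with a weight map wt into an abelian group P with distinguished elements α_i (i ∈ I), satisfying wt(e_i b) = wt(b) + α_i whenever e_i b ≠ 0. Let t ∈ I with t ≠ 0, let τ be a permutation of I with τ(t) = 0, and let ϖ^∨ : P → ℤ be a group homomorphism with ϖ^∨(α_j) = δ_{jt} for all j ∈ I ∖ {0} and ϖ^∨(α_0) = −1. Suppose given bijections τ_1 : B1 → B1 and τ_2 : B2 → B2 with τ_j ∘ e_i = e_{τ(i)} ∘ τ_j and τ_j ∘ f_i = f_{τ(i)} ∘ τ_j for all i ∈ I (j = 1, 2; with τ_j(0) = 0), an isomorphism of I-crystals σ : B1 ⊗ B2 → B2 ⊗ B1 satisfying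 σ(τ_1 b1 ⊗ τ_2 b2) = τ_2 b̃2 ⊗ τ_1 b̃1 whenever σ(b1 ⊗ b2) = b̃2 ⊗ b̃1, and a local energy function H : B1 ⊗ B2 → ℤ with respect to σ. Assume there exist u1 ∈ B1, u2 ∈ B2 such that σ(u1 ⊗ u2) = u2 ⊗ u1, H(τ_1 u1 ⊗ τ_2 u2) = H(u1 ⊗ u2), and every element of B1 ⊗ B2 has the form e_{i_k} ⋯ e_{i_1}(u1 ⊗ u2) for some k ≥ 0 and i_1, …, i_k ∈ I. Then for every b1 ∈ B1, b2 ∈ B2, writing σ(b1 ⊗ b2) = b̃2 ⊗ b̃1, one has H(b1 ⊗ b2) − H(τ_1 b1 ⊗ τ_2 b2) = ϖ^∨(wt(b2)) − ϖ^∨(wt(b̃2)). -/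
/-- `e_i` acts on the first tensor factor of `p = a ⊗ b` iff `φ_i(a) ≥ ε_i(b)`. -/
def actsLeft {I A B : Type*} (cA : Crystal I A) (cB : Crystal I B) (i : I) (p : A × B) : Prop :=
  cB.eps i p.2 ≤ cA.phi i p.1

noncomputable instance {I A B : Type*} (cA : Crystal I A) (cB : Crystal I B) (i : I)
    (p : A × B) : Decidable (actsLeft cA cB i p) :=
  inferInstanceAs (Decidable (cB.eps i p.2 ≤ cA.phi i p.1))

/-- `σ : B1 ⊗ B2 → B2 ⊗ B1` is an isomorphism of `I`-crystals: a bijection commuting with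
all `e_i` and `f_i` (sending `0` to `0`). -/
structure IsCrystalIso {I B1 B2 : Type*} (c1 : Crystal I B1) (c2 : Crystal I B2)
    (σ : B1 × B2 → B2 × B1) : Prop where
  bij : Function.Bijective σ
  comm_e : ∀ (i : I) (p : B1 × B2), Option.map σ (tensorE c1 c2 i p) = tensorE c2 c1 i (σ p)
  comm_f : ∀ (i : I) (p : B1 × B2), Option.map σ (tensorF c1 c2 i p) = tensorF c2 c1 i (σ p)

/-- `H : B1 ⊗ B2 → ℤ` is a local energy function with respect to `σ`: it is unchanged by
`e_i` for `i ≠ 0`, and changes by `+1` (resp. `−1`, resp. `0`) under `e_0` according to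
whether `e_0` acts on the left (resp. right, resp. mixed) factors of `x` and `σ(x)`. -/
structure IsLocalEnergy {I B1 B2 : Type*} (i0 : I) (c1 : Crystal I B1) (c2 : Crystal I B2)
    (σ : B1 × B2 → B2 × B1) (H : B1 × B2 → ℤ) : Prop where
  ne_zero : ∀ (i : I), i ≠ i0 → ∀ (x y : B1 × B2), tensorE c1 c2 i x = some y → H y = H x
  zero_LL : ∀ (x y : B1 × B2), tensorE c1 c2 i0 x = some y →
    actsLeft c1 c2 i0 x → actsLeft c2 c1 i0 (σ x) → H y = H x + 1
  zero_RR : ∀ (x y : B1 × B2), tensorE c1 c2 i0 x = some y →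
    ¬ actsLeft c1 c2 i0 x → ¬ actsLeft c2 c1 i0 (σ x) → H y = H x - 1
  zero_mixed : ∀ (x y : B1 × B2), tensorE c1 c2 i0 x = some y →
    ¬ (actsLeft c1 c2 i0 x ↔ actsLeft c2 c1 i0 (σ x)) → H y = H x

/-- Apply a sequence of operators `e_{j_1}, …, e_{j_ℓ}` (in this order) to `x`. -/
def applyList {I X : Type*} (step : I → X → Option X) (J : List I) (x : X) : Option X :=
  J.foldl (fun o j => o.bind (step j)) (some x)

/-- Along the application of `e_{j_1}, …, e_{j_ℓ}` to `p ∈ A ⊗ B`, count the steps with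
`j_q = i0` that act on the first factor (if `onFirst = true`) resp. on the second factor
(if `onFirst = false`), following the tensor-product rule. -/
noncomputable def zeroCount {I A B : Type*} [DecidableEq I] (cA : Crystal I A)
    (cB : Crystal I B) (i0 : I) (onFirst : Bool) : List I → A × B → ℕ
  | [], _ => 0
  | j :: J, p =>
      (if j = i0 ∧ (actsLeft cA cB j p ↔ onFirst = true) then 1 else 0) +
        (tensorE cA cB j p).elim 0 (zeroCount cA cB i0 onFirst J)

lemma semiconj_optionMap_bind {B B' : Type*} {e : B → Option B} {e' : B' → Option B'}
    {g : B → B'} (h : ∀ b, Option.map g (e b) = e' (g b)) :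
    Function.Semiconj (Option.map g) (fun o => o.bind e) (fun o => o.bind e') := by
  rintro (_ | b)
  · rfl
  · simpa using h b

lemma epsOf_map {B B' : Type*} {e : B → Option B} {e' : B' → Option B'} {g : B → B'}
    (h : ∀ b, Option.map g (e b) = e' (g b)) (b : B) : epsOf e' (g b) = epsOf e b := by
  unfold epsOf
  congr 1
  ext k
  rw [Set.mem_ofPred_eq, Set.mem_ofPred_eq, ← Option.map_some,
    ← (semiconj_optionMap_bind h).iterate_right k, ne_eq, ne_eq, Option.map_eq_none_iff]

lemma foldl_bind_eq_bind_applyList {I X : Type*} (step : I → X → Option X) (J : List I)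
    (o : Option X) : J.foldl (fun o j => o.bind (step j)) o = o.bind (applyList step J) := by
  cases o with
  | none =>
    induction J with
    | nil => rfl
    | cons _ _ ih => exact ih
  | some _ => rfl

lemma applyList_cons {I X : Type*} (step : I → X → Option X) (j : I) (J : List I) (x : X) :
    applyList step (j :: J) x = (step j x).bind (applyList step J) :=
  foldl_bind_eq_bind_applyList step J (step j x)

lemma applyList_invariant {I X Z : Type*} {step : I → X → Option X} (f : X → Z)
    (hf : ∀ i x y, step i x = some y → f y = f x) :
    ∀ (J : List I) {x y : X}, applyList step J x = some y → f y = f x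
  | [], x, y, h => by rw [Option.some_inj.mp h]
  | j :: J, x, y, h => by
    rw [applyList_cons] at h
    obtain ⟨z, hz, hzy⟩ := Option.bind_eq_some_iff.mp h
    rw [applyList_invariant f hf J hzy, hf j x z hz]

namespace Crystal

variable {I B : Type*} (c : Crystal I B) {τ : I → I} {g : B → B}

lemma eps_map (he : ∀ i b, Option.map g (c.e i b) = c.e (τ i) (g b)) (i : I) (b : B) :
    c.eps (τ i) (g b) = c.eps i b :=
  epsOf_map (he i) b

lemma phi_map (hf : ∀ i b, Option.map g (c.f i b) = c.f (τ i) (g b)) (i : I) (b : B) :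
    c.phi (τ i) (g b) = c.phi i b :=
  epsOf_map (hf i) b

end Crystal

section Tensor

variable {I A B : Type*} {cA : Crystal I A} {cB : Crystal I B} {i : I} {p q : A × B}

lemma tensorE_eq_some (h : tensorE cA cB i p = some q) :
    actsLeft cA cB i p ∧ cA.e i p.1 = some q.1 ∧ q.2 = p.2 ∨
      ¬ actsLeft cA cB i p ∧ cB.e i p.2 = some q.2 ∧ q.1 = p.1 := by
  unfold tensorE at h
  split_ifs at h with hL
  · obtain ⟨a, ha, rfl⟩ := Option.map_eq_some_iff.mp h
    exact Or.inl ⟨hL, ha, rfl⟩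
  · obtain ⟨b, hb, rfl⟩ := Option.map_eq_some_iff.mp h
    exact Or.inr ⟨hL, hb, rfl⟩

variable {P : Type*} [AddCommMonoid P] {α : I → P}

lemma tensorE_wt_fst {wt : A → P} (hwt : ∀ i a a', cA.e i a = some a' → wt a' = wt a + α i)
    (h : tensorE cA cB i p = some q) :
    wt q.1 = wt p.1 + if actsLeft cA cB i p then α i else 0 := by
  rcases tensorE_eq_some h with ⟨hL, h1, -⟩ | ⟨hL, -, h1⟩
  · rw [if_pos hL, hwt i _ _ h1]
  · rw [if_neg hL, h1, add_zero]

lemma tensorE_wt_snd {wt : B → P} (hwt : ∀ i b b', cB.e i b = some b' → wt b' = wt b + α i)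
    (h : tensorE cA cB i p = some q) :
    wt q.2 = wt p.2 + if actsLeft cA cB i p then 0 else α i := by
  rcases tensorE_eq_some h with ⟨hL, -, h2⟩ | ⟨hL, h2, -⟩
  · rw [if_pos hL, h2, add_zero]
  · rw [if_neg hL, hwt i _ _ h2]

variable {τ : I → I} {gA : A → A} {gB : B → B}

lemma actsLeft_map (hfA : ∀ i a, Option.map gA (cA.f i a) = cA.f (τ i) (gA a))
    (heB : ∀ i b, Option.map gB (cB.e i b) = cB.e (τ i) (gB b)) (i : I) (p : A × B) :
    actsLeft cA cB (τ i) (Prod.map gA gB p) ↔ actsLeft cA cB i p := by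
  simp only [actsLeft, Prod.map_fst, Prod.map_snd, cA.phi_map hfA, cB.eps_map heB]

lemma tensorE_map (heA : ∀ i a, Option.map gA (cA.e i a) = cA.e (τ i) (gA a))
    (hfA : ∀ i a, Option.map gA (cA.f i a) = cA.f (τ i) (gA a))
    (heB : ∀ i b, Option.map gB (cB.e i b) = cB.e (τ i) (gB b)) (i : I) (p : A × B) :
    tensorE cA cB (τ i) (Prod.map gA gB p) = (tensorE cA cB i p).map (Prod.map gA gB) := by
  simp only [tensorE, Prod.map_fst, Prod.map_snd, cA.phi_map hfA, cB.eps_map heB]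
  split_ifs
  · rw [← heA, Option.map_map, Option.map_map]
    rfl
  · rw [← heB, Option.map_map, Option.map_map]
    rfl

end Tensor

section Energy

variable {I B1 B2 : Type*} {c1 : Crystal I B1} {c2 : Crystal I B2} {σ : B1 × B2 → B2 × B1}
  {i : I} {p q : B1 × B2}

lemma IsCrystalIso.tensorE_eq_some (hσ : IsCrystalIso c1 c2 σ)
    (h : tensorE c1 c2 i p = some q) : tensorE c2 c1 i (σ p) = some (σ q) := by
  rw [← hσ.comm_e, h, Option.map_some]

variable [DecidableEq I] {i0 : I} {H : B1 × B2 → ℤ}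

lemma IsLocalEnergy.sub_eq (hH : IsLocalEnergy i0 c1 c2 σ H) (h : tensorE c1 c2 i p = some q) :
    H q - H p = if i = i0 then
      (if actsLeft c1 c2 i p then 1 else 0) + (if actsLeft c2 c1 i (σ p) then 1 else 0) - 1
    else 0 := by
  split_ifs with hi hL hL' hL'
  · subst hi
    rw [hH.zero_LL p q h hL hL']
    ring
  · subst hi
    rw [hH.zero_mixed p q h (by tauto)]
    ring
  · subst hi
    rw [hH.zero_mixed p q h (by tauto)]
    ring
  · subst hi
    rw [hH.zero_RR p q h hL hL']
    ring
  · rw [hH.ne_zero i hi p q h, sub_self]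

lemma IsLocalEnergy.sub_eq_of_map (hH : IsLocalEnergy i0 c1 c2 σ H) {τ : I → I}
    {g1 : B1 → B1} {g2 : B2 → B2}
    (he1 : ∀ i b, Option.map g1 (c1.e i b) = c1.e (τ i) (g1 b))
    (hf1 : ∀ i b, Option.map g1 (c1.f i b) = c1.f (τ i) (g1 b))
    (he2 : ∀ i b, Option.map g2 (c2.e i b) = c2.e (τ i) (g2 b))
    (hf2 : ∀ i b, Option.map g2 (c2.f i b) = c2.f (τ i) (g2 b))
    (hσg : ∀ p, σ (Prod.map g1 g2 p) = Prod.map g2 g1 (σ p))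
    (h : tensorE c1 c2 i p = some q) :
    H (Prod.map g1 g2 q) - H (Prod.map g1 g2 p) = if τ i = i0 then
      (if actsLeft c1 c2 i p then 1 else 0) + (if actsLeft c2 c1 i (σ p) then 1 else 0) - 1
    else 0 := by
  have hg : tensorE c1 c2 (τ i) (Prod.map g1 g2 p) = some (Prod.map g1 g2 q) := by
    rw [tensorE_map he1 hf1 he2, h, Option.map_some]
  rw [hH.sub_eq hg, hσg]
  simp only [actsLeft_map hf1 he2, actsLeft_map hf2 he1]

end Energy

theorem local_energy_twist_general {I B1 B2 P : Type*} [DecidableEq I] [AddCommGroup P] (i0 : I)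
    (c1 : Crystal I B1) (c2 : Crystal I B2)
    (α : I → P) (wt2 : B2 → P)
    (hwt2 : ∀ (i : I) (b b' : B2), c2.e i b = some b' → wt2 b' = wt2 b + α i)
    (t : I) (ht : t ≠ i0) (τ : Equiv.Perm I) (hτt : τ t = i0)
    (ϖ : P →+ ℤ) (hϖ : ∀ j, j ≠ i0 → ϖ (α j) = if j = t then 1 else 0)
    (hϖ0 : ϖ (α i0) = -1)
    (τ1 : B1 → B1) (τ2 : B2 → B2)
    (hτ1e : ∀ (i : I) (b : B1), Option.map τ1 (c1.e i b) = c1.e (τ i) (τ1 b))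
    (hτ1f : ∀ (i : I) (b : B1), Option.map τ1 (c1.f i b) = c1.f (τ i) (τ1 b))
    (hτ2e : ∀ (i : I) (b : B2), Option.map τ2 (c2.e i b) = c2.e (τ i) (τ2 b))
    (hτ2f : ∀ (i : I) (b : B2), Option.map τ2 (c2.f i b) = c2.f (τ i) (τ2 b))
    (σ : B1 × B2 → B2 × B1) (hσ : IsCrystalIso c1 c2 σ)
    (hστ : ∀ p : B1 × B2, σ (τ1 p.1, τ2 p.2) = (τ2 (σ p).1, τ1 (σ p).2))
    (H : B1 × B2 → ℤ) (hH : IsLocalEnergy i0 c1 c2 σ H)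
    (u1 : B1) (u2 : B2) (hu : σ (u1, u2) = (u2, u1))
    (hHu : H (τ1 u1, τ2 u2) = H (u1, u2))
    (hconn : ∀ p : B1 × B2, ∃ J : List I, applyList (tensorE c1 c2) J (u1, u2) = some p)
    (b1 : B1) (b2 : B2) :
    H (b1, b2) - H (τ1 b1, τ2 b2) = ϖ (wt2 b2) - ϖ (wt2 (σ (b1, b2)).1) := by
  have hϖα : ∀ i, ϖ (α i) = (if i = t then 1 else 0) - if i = i0 then 1 else 0 := by
    intro i
    by_cases hi : i = i0
    · simp [hi, hϖ0, ht.symm]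
    · simp [hi, hϖ i hi]
  have hτ : ∀ i, τ i = i0 ↔ i = t := fun i => by rw [← hτt, τ.injective.eq_iff]
  let D : B1 × B2 → ℤ := fun p => H p - H (τ1 p.1, τ2 p.2) - ϖ (wt2 p.2) + ϖ (wt2 (σ p).1)
  have hD : ∀ i p q, tensorE c1 c2 i p = some q → D q = D p := by
    intro i p q hpq
    have hH1 := hH.sub_eq hpq
    have hH2 := hH.sub_eq_of_map hτ1e hτ1f hτ2e hτ2f hστ hpq
    have hw2 := tensorE_wt_snd hwt2 hpq
    have hw1 := tensorE_wt_fst hwt2 (hσ.tensorE_eq_some hpq)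
    simp only [Prod.map, hτ] at hH2
    simp only [D, hw1, hw2, map_add, apply_ite ϖ, map_zero, hϖα]
    split_ifs at * <;> linarith
  obtain ⟨J, hJ⟩ := hconn (b1, b2)
  have h0 := applyList_invariant D hD J hJ
  simp only [D, hu, hHu, sub_self, zero_sub] at h0
  linarith

/-- for a Dynkin automorphism `τ` with `τ(t) = 0` acting compatibly on `B1`,
`B2`, commuting with `σ`, and normalized on a generating element `u1 ⊗ u2`, one has
`H(b1 ⊗ b2) − H(τ b1 ⊗ τ b2) = ϖ^∨(wt(b2)) − ϖ^∨(wt(b̃2))` where `σ(b1 ⊗ b2) = b̃2 ⊗ b̃1`. -/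
theorem local_energy_twist {I B1 B2 P : Type*} [DecidableEq I] [AddCommGroup P] (i0 : I)
    (c1 : Crystal I B1) (c2 : Crystal I B2)
    (α : I → P) (wt1 : B1 → P) (wt2 : B2 → P)
    (hwt1 : ∀ (i : I) (b b' : B1), c1.e i b = some b' → wt1 b' = wt1 b + α i)
    (hwt2 : ∀ (i : I) (b b' : B2), c2.e i b = some b' → wt2 b' = wt2 b + α i)
    (t : I) (ht : t ≠ i0) (τ : Equiv.Perm I) (hτt : τ t = i0)
    (ϖ : P →+ ℤ) (hϖ : ∀ j, j ≠ i0 → ϖ (α j) = if j = t then 1 else 0)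
    (hϖ0 : ϖ (α i0) = -1)
    (τ1 : B1 → B1) (τ2 : B2 → B2)
    (hτ1bij : Function.Bijective τ1) (hτ2bij : Function.Bijective τ2)
    (hτ1e : ∀ (i : I) (b : B1), Option.map τ1 (c1.e i b) = c1.e (τ i) (τ1 b))
    (hτ1f : ∀ (i : I) (b : B1), Option.map τ1 (c1.f i b) = c1.f (τ i) (τ1 b))
    (hτ2e : ∀ (i : I) (b : B2), Option.map τ2 (c2.e i b) = c2.e (τ i) (τ2 b))
    (hτ2f : ∀ (i : I) (b : B2), Option.map τ2 (c2.f i b) = c2.f (τ i) (τ2 b))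
    (σ : B1 × B2 → B2 × B1) (hσ : IsCrystalIso c1 c2 σ)
    (hστ : ∀ p : B1 × B2, σ (τ1 p.1, τ2 p.2) = (τ2 (σ p).1, τ1 (σ p).2))
    (H : B1 × B2 → ℤ) (hH : IsLocalEnergy i0 c1 c2 σ H)
    (u1 : B1) (u2 : B2) (hu : σ (u1, u2) = (u2, u1))
    (hHu : H (τ1 u1, τ2 u2) = H (u1, u2))
    (hconn : ∀ p : B1 × B2, ∃ J : List I, applyList (tensorE c1 c2) J (u1, u2) = some p)
    (b1 : B1) (b2 : B2) :
    H (b1, b2) - H (τ1 b1, τ2 b2) = ϖ (wt2 b2) - ϖ (wt2 (σ (b1, b2)).1) :=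
  local_energy_twist_general i0 c1 c2 α wt2 hwt2 t ht τ hτt ϖ hϖ hϖ0 τ1 τ2 hτ1e hτ1f hτ2e hτ2f σ hσ
    hστ H hH u1 u2 hu hHu hconn b1 b2
end
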